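/- Every (1,β+1)-BM relation U lies in ψ_β(R) for some (1,β)-BM relation R; equivalently, R_{1,β+1} = ⋃_{R ∈ R_{1,β}} ψ_β(R). -/

import Mathlib

open Set

/-- Signed letters: letter index together with a sign (`true` = positive). -/
abbrev V (n : ℕ) := Fin n × Bool

/-- Formal inversion of a signed letter. -/
def iv {n : ℕ} (x : V n) : V n := (x.1, !x.2)

/-- Oriented squares: tuples (a, b, a', b'). -/
abbrev Tup (α β : ℕ) := V α × V β × V α × V β

/-- The geometric square [aba'b'], as the set of its four representatives. -/
def square {α β : ℕ} (a : V α) (b : V β) (a' : V α) (b' : V β) : Set (Tup α β) :=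
  {(a, b, a', b'), (a', b', a, b), (iv a, iv b', iv a', iv b), (iv a', iv b, iv a, iv b')}

/-- The link of a set of geometric squares: the set of (horizontal, vertical)
edges contributed by the corners of the squares. -/
def link {α β : ℕ} (R : Set (Set (Tup α β))) : Set (V α × V β) :=
  {e | ∃ q ∈ R, ∃ t ∈ q, e = (iv t.1, t.2.1)}

/-- An (α,β)-BM relation: a set of α·β geometric squares whose link is the
complete bipartite graph K_{2α,2β}. -/
def IsBM (α β : ℕ) (R : Set (Set (Tup α β))) : Prop :=
  (∀ q ∈ R, ∃ a b a' b', q = square a b a' b') ∧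
  R.ncard = α * β ∧ link R = Set.univ

/-- Embedding of old vertical letters into the enlarged alphabet. -/
def up {β : ℕ} (b : V β) : V (β + 1) := (b.1.castSucc, b.2)

/-- The new vertical letter b_{β+1}. -/
def bn (β : ℕ) : V (β + 1) := (Fin.last β, true)

/-- Embedding of tuples along `up`. -/
def upT {α β : ℕ} (t : Tup α β) : Tup α (β + 1) :=
  (t.1, up t.2.1, t.2.2.1, up t.2.2.2)

/-- Embedding of a geometric square into the enlarged alphabet. -/
def upSq {α β : ℕ} (q : Set (Tup α β)) : Set (Tup α (β + 1)) := upT '' q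

/-- Embedding of a set of geometric squares into the enlarged alphabet. -/
def upR {α β : ℕ} (R : Set (Set (Tup α β))) : Set (Set (Tup α (β + 1))) := upSq '' R

/-- The generator a₁. -/
def a1 : V 1 := (0, true)

/-- ψ_β^{(1)}: adjoin one of the three squares involving only b_{β+1}. -/
def psi1 (β : ℕ) (R : Set (Set (Tup 1 β))) : Set (Set (Set (Tup 1 (β + 1)))) :=
  (fun s => upR R ∪ {s}) ''
    {square a1 (bn β) (iv a1) (iv (bn β)),
     square a1 (bn β) a1 (iv (bn β)),
     square a1 (bn β) (iv a1) (bn β)}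

/-- ψ_β^{(2)}: replace one square [aba'b'] of R by one of the two pairs
{[a b_{β+1} a' b'], [a b a' b_{β+1}⁻¹]} or {[a b_{β+1}⁻¹ a' b'], [a b a' b_{β+1}]}. -/
def psi2 (β : ℕ) (R : Set (Set (Tup 1 β))) : Set (Set (Set (Tup 1 (β + 1)))) :=
  {U | ∃ a b a' b', square a b a' b' ∈ R ∧
    (U = upR (R \ {square a b a' b'}) ∪
        {square a (bn β) a' (up b'), square a (up b) a' (iv (bn β))} ∨
     U = upR (R \ {square a b a' b'}) ∪
        {square a (iv (bn β)) a' (up b'), square a (up b) a' (bn β)})}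

/-- The map ψ_β. -/
def psi (β : ℕ) (R : Set (Set (Tup 1 β))) : Set (Set (Set (Tup 1 (β + 1)))) :=
  psi1 β R ∪ psi2 β R

section Lemmas
open Classical

@[simp] lemma iv_iv {n : ℕ} (x : V n) : iv (iv x) = x := by simp [iv]

lemma iv_ne {n : ℕ} (x : V n) : iv x ≠ x := by
  simp [iv, Prod.ext_iff]

lemma up_iv {β : ℕ} (b : V β) : up (iv b) = iv (up b) := rfl

lemma up_inj {β : ℕ} : Function.Injective (up (β := β)) := by
  rintro ⟨i, s⟩ ⟨j, t⟩ h
  simp only [up, Prod.mk.injEq, Fin.castSucc_inj] at h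
  simp [h.1, h.2]

lemma upT_inj {α β : ℕ} : Function.Injective (upT (α := α) (β := β)) := by
  rintro ⟨x, b, x', b'⟩ ⟨y, c, y', c'⟩ h
  simp only [upT, Prod.mk.injEq] at h ⊢
  exact ⟨h.1, up_inj h.2.1, h.2.2.1, up_inj h.2.2.2⟩

lemma upSq_inj {α β : ℕ} : Function.Injective (upSq (α := α) (β := β)) :=
  Set.image_injective.2 upT_inj

/-- edges of a set of tuples -/
def edges {α β : ℕ} (q : Set (Tup α β)) : Set (V α × V β) :=
  (fun t => (iv t.1, t.2.1)) '' q

lemma link_eq {α β : ℕ} (R : Set (Set (Tup α β))) :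
    link R = ⋃ q ∈ R, edges q := by
  ext e
  simp only [link, edges, Set.mem_setOf_eq, Set.mem_iUnion, Set.mem_image]
  constructor
  · rintro ⟨q, hq, t, ht, rfl⟩; exact ⟨q, hq, t, ht, rfl⟩
  · rintro ⟨q, hq, t, ht, rfl⟩; exact ⟨q, hq, t, ht, rfl⟩

lemma square_swap {α β : ℕ} (a : V α) (b : V β) (a' : V α) (b' : V β) :
    square a b a' b' = square a' b' a b := by
  ext t; simp only [square, Set.mem_insert_iff, Set.mem_singleton_iff]; tauto

lemma square_inv {α β : ℕ} (a : V α) (b : V β) (a' : V α) (b' : V β) :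
    square a b a' b' = square (iv a) (iv b') (iv a') (iv b) := by
  ext t; simp only [square, Set.mem_insert_iff, Set.mem_singleton_iff, iv_iv]; tauto

lemma edges_square {α β : ℕ} (a : V α) (b : V β) (a' : V α) (b' : V β) :
    edges (square a b a' b') = {(iv a, b), (iv a', b'), (a, iv b'), (a', iv b)} := by
  simp only [edges, square, Set.image_insert_eq, Set.image_singleton, iv_iv]

lemma edges_upSq {α β : ℕ} (q : Set (Tup α β)) :
    edges (upSq q) = (fun e : V α × V β => (e.1, up e.2)) '' edges q := by
  simp only [edges, upSq, Set.image_image]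
  rfl

end Lemmas

lemma upSq_square {α β : ℕ} (a : V α) (b : V β) (a' : V α) (b' : V β) :
    upSq (square a b a' b') = square a (up b) a' (up b') := by
  simp only [upSq, square, Set.image_insert_eq, Set.image_singleton, upT, up_iv]

lemma V1_cases (x : V 1) : x = a1 ∨ x = iv a1 := by
  obtain ⟨i, s⟩ := x
  have : i = 0 := Subsingleton.elim _ _
  cases s <;> simp [this, a1, iv]

lemma V1_pair (x : V 1) : ({x, iv x} : Set (V 1)) = {a1, iv a1} := by
  rcases V1_cases x with rfl | rfl <;> simp [Set.pair_comm]

/-- the vertical index of letters (used to detect "new" letters) -/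
lemma Vnew_cases {β : ℕ} (v : V (β + 1)) (h : v.1 = Fin.last β) :
    v = bn β ∨ v = iv (bn β) := by
  obtain ⟨i, s⟩ := v
  cases s <;> simp_all [bn, iv]

lemma Vold_cases {β : ℕ} (v : V (β + 1)) (h : v.1 ≠ Fin.last β) :
    ∃ w : V β, v = up w := by
  obtain ⟨i, s⟩ := v
  rcases i.eq_castSucc_or_eq_last with ⟨j, rfl⟩ | hl
  · exact ⟨(j, s), rfl⟩
  · simp_all

lemma up_ne_last {β : ℕ} (w : V β) : (up w).1 ≠ Fin.last β := by
  simpa [up] using (Fin.castSucc_lt_last w.1).ne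

lemma bm_finite {n : ℕ} {R : Set (Set (Tup 1 n))} (h : IsBM 1 n R) : R.Finite := by
  rcases Nat.eq_zero_or_pos n with rfl | hn
  · have : R = ∅ := by
      ext q
      simp only [Set.mem_empty_iff_false, iff_false]
      intro hq
      obtain ⟨a, b, a', b', rfl⟩ := h.1 q hq
      exact (Fin.elim0 b.1)
    simp [this]
  · by_contra hinf
    have h0 := Set.Infinite.ncard (s := R) hinf
    have h1 := h.2.1
    rw [h0] at h1
    omega

lemma mem_edges {α β : ℕ} {q : Set (Tup α β)} {t : Tup α β} (ht : t ∈ q) :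
    (iv t.1, t.2.1) ∈ edges q := ⟨t, ht, rfl⟩

/-- every edge of a square arises from a representation with that edge "first" -/
lemma rep_of_edge {α β : ℕ} {a : V α} {b : V β} {a' : V α} {b' : V β} {e : V α × V β}
    (he : e ∈ edges (square a b a' b')) :
    ∃ y u y' u', square a b a' b' = square y u y' u' ∧ e = (iv y, u) := by
  rw [edges_square] at he
  simp only [Set.mem_insert_iff, Set.mem_singleton_iff] at he
  rcases he with rfl | rfl | rfl | rfl
  · exact ⟨a, b, a', b', rfl, rfl⟩
  · exact ⟨a', b', a, b, square_swap _ _ _ _, rfl⟩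
  · exact ⟨iv a, iv b', iv a', iv b, square_inv _ _ _ _, by simp⟩
  · exact ⟨iv a', iv b, iv a, iv b', (square_swap _ _ _ _).trans (square_inv _ _ _ _), by simp⟩

lemma bm_partition {n : ℕ} {R : Set (Set (Tup 1 n))} (h : IsBM 1 n R) :
    (∀ q ∈ R, (edges q).ncard = 4) ∧
    (∀ q ∈ R, ∀ q' ∈ R, q ≠ q' → Disjoint (edges q) (edges q')) := by
  classical
  have hfin : R.Finite := bm_finite h
  set S : Finset (Set (Tup 1 n)) := hfin.toFinset with hSdef
  have hmemS : ∀ q, q ∈ S ↔ q ∈ R := fun q => hfin.mem_toFinset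
  set f : Set (Tup 1 n) → Finset (V 1 × V n) := fun q => (Set.toFinite (edges q)).toFinset
    with hfdef
  have hmemf : ∀ q e, e ∈ f q ↔ e ∈ edges q := fun q e => Set.Finite.mem_toFinset _
  have hScard : S.card = n := by
    have h21 := h.2.1
    rw [one_mul] at h21
    rw [hSdef, ← Set.ncard_eq_toFinset_card R hfin, h21]
  have hcardE : Fintype.card (V 1 × V n) = 4 * n := by
    simp only [Fintype.card_prod, Fintype.card_fin, Fintype.card_bool]
    ring
  have hcover : (Finset.univ : Finset (V 1 × V n)) = S.biUnion f := by
    ext e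
    simp only [Finset.mem_univ, true_iff, Finset.mem_biUnion]
    have he : e ∈ link R := h.2.2 ▸ Set.mem_univ e
    rw [link_eq] at he
    simp only [Set.mem_iUnion, exists_prop] at he
    obtain ⟨q, hq, heq⟩ := he
    exact ⟨q, (hmemS q).2 hq, (hmemf q e).2 heq⟩
  have hle : ∀ q ∈ S, (f q).card ≤ 4 := by
    intro q hq
    obtain ⟨a, b, a', b', rfl⟩ := h.1 q ((hmemS q).1 hq)
    have hsub : f (square a b a' b') ⊆ {(iv a, b), (iv a', b'), (a, iv b'), (a', iv b)} := by
      intro e he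
      rw [hmemf, edges_square] at he
      simpa using he
    calc (f (square a b a' b')).card ≤ _ := Finset.card_le_card hsub
      _ ≤ 4 := by
        apply le_trans (Finset.card_insert_le _ _)
        apply Nat.succ_le_succ
        apply le_trans (Finset.card_insert_le _ _)
        apply Nat.succ_le_succ
        apply le_trans (Finset.card_insert_le _ _)
        simp
  have hchain : 4 * n ≤ ∑ q ∈ S, (f q).card := by
    calc 4 * n = (Finset.univ : Finset (V 1 × V n)).card := by rw [Finset.card_univ, hcardE]
      _ = (S.biUnion f).card := by rw [hcover]
      _ ≤ ∑ q ∈ S, (f q).card := Finset.card_biUnion_le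
  have hcard4 : ∀ q ∈ S, (f q).card = 4 := by
    by_contra hc
    push_neg at hc
    obtain ⟨q0, hq0, hne⟩ := hc
    have hlt : (f q0).card < 4 := lt_of_le_of_ne (hle q0 hq0) hne
    have hstrict : ∑ q ∈ S, (f q).card < ∑ _q ∈ S, 4 :=
      Finset.sum_lt_sum (fun i hi => hle i hi) ⟨q0, hq0, hlt⟩
    rw [Finset.sum_const, hScard, smul_eq_mul] at hstrict
    omega
  have hdisjF : ∀ q ∈ S, ∀ q' ∈ S, q ≠ q' → Disjoint (f q) (f q') := by
    intro q hq q' hq' hne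
    rw [Finset.disjoint_left]
    intro e heq heq'
    exfalso
    have hsub : (Finset.univ : Finset (V 1 × V n)) ⊆ (f q).erase e ∪ (S.erase q).biUnion f := by
      intro x _
      have hx : x ∈ S.biUnion f := by rw [← hcover]; exact Finset.mem_univ x
      rw [Finset.mem_biUnion] at hx
      obtain ⟨r, hr, hxr⟩ := hx
      rcases eq_or_ne r q with rfl | hrq
      · rcases eq_or_ne x e with rfl | hxe
        · exact Finset.mem_union_right _
            (Finset.mem_biUnion.2 ⟨q', Finset.mem_erase.2 ⟨hne.symm, hq'⟩, heq'⟩)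
        · exact Finset.mem_union_left _ (Finset.mem_erase.2 ⟨hxe, hxr⟩)
      · exact Finset.mem_union_right _
          (Finset.mem_biUnion.2 ⟨r, Finset.mem_erase.2 ⟨hrq, hr⟩, hxr⟩)
    have hcard := Finset.card_le_card hsub
    have h1 : ((f q).erase e ∪ (S.erase q).biUnion f).card ≤ 3 + 4 * (n - 1) := by
      apply le_trans (Finset.card_union_le _ _)
      have he1 : ((f q).erase e).card = 3 := by
        rw [Finset.card_erase_of_mem heq, hcard4 q hq]
      have he2 : ((S.erase q).biUnion f).card ≤ 4 * (n - 1) := by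
        apply le_trans Finset.card_biUnion_le
        calc ∑ r ∈ S.erase q, (f r).card ≤ ∑ _r ∈ S.erase q, 4 :=
              Finset.sum_le_sum (fun i hi => hle i (Finset.mem_of_mem_erase hi))
          _ = 4 * (n - 1) := by
              rw [Finset.sum_const, Finset.card_erase_of_mem hq, hScard, smul_eq_mul]
              ring
      omega
    have hn1 : 1 ≤ n := by rw [← hScard]; exact Finset.card_pos.2 ⟨q, hq⟩
    rw [Finset.card_univ, hcardE] at hcard
    omega
  constructor
  · intro q hq
    rw [Set.ncard_eq_toFinset_card (edges q) (Set.toFinite _)]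
    exact hcard4 q ((hmemS q).2 hq)
  · intro q hq q' hq' hne
    have := hdisjF q ((hmemS q).2 hq) q' ((hmemS q').2 hq') hne
    rw [Finset.disjoint_left] at this
    rw [Set.disjoint_left]
    intro e he he'
    exact this ((hmemf q e).2 he) ((hmemf q' e).2 he')

@[simp] lemma bn_ne_up {β : ℕ} (w : V β) : bn β ≠ up w := by
  intro h; exact up_ne_last w (by rw [← h]; rfl)

@[simp] lemma ivbn_ne_up {β : ℕ} (w : V β) : iv (bn β) ≠ up w := by
  intro h; exact up_ne_last w (by rw [← h]; rfl)

@[simp] lemma up_ne_bn {β : ℕ} (w : V β) : up w ≠ bn β := (bn_ne_up w).symm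

@[simp] lemma up_ne_ivbn {β : ℕ} (w : V β) : up w ≠ iv (bn β) := (ivbn_ne_up w).symm

@[simp] lemma bn_ne_ivbn {β : ℕ} : bn β ≠ iv (bn β) := (iv_ne _).symm

@[simp] lemma ivbn_ne_bn {β : ℕ} : iv (bn β) ≠ bn β := iv_ne _

lemma V1_eq_or (x y : V 1) : x = y ∨ x = iv y := by
  rcases V1_cases x with rfl | rfl <;> rcases V1_cases y with rfl | rfl <;> simp

lemma iv_eq_iff {n : ℕ} {x y : V n} : iv x = y ↔ x = iv y := by
  constructor <;> (rintro rfl; simp)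

/-- membership in upR forces all slot-2 letters old -/
lemma upR_old {β : ℕ} {R' : Set (Set (Tup 1 β))} {q : Set (Tup 1 (β + 1))}
    (hq : q ∈ upR R') : ∀ t ∈ q, t.2.1.1 ≠ Fin.last β := by
  obtain ⟨r, _, rfl⟩ := hq
  rintro t ⟨s, _, rfl⟩
  exact up_ne_last s.2.1

lemma notin_upR {β : ℕ} {R' : Set (Set (Tup 1 β))} {q : Set (Tup 1 (β + 1))}
    {t : Tup 1 (β + 1)} (ht : t ∈ q) (hnew : t.2.1.1 = Fin.last β) : q ∉ upR R' :=
  fun hq => upR_old hq t ht hnew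

lemma ncard_upR {β : ℕ} (R' : Set (Set (Tup 1 β))) : (upR R').ncard = R'.ncard :=
  Set.ncard_image_of_injective R' upSq_inj

lemma mem_link_of {α β : ℕ} {U : Set (Set (Tup α β))} {q : Set (Tup α β)}
    {e : V α × V β} (hq : q ∈ U) (he : e ∈ edges q) : e ∈ link U := by
  rw [link_eq]; exact Set.mem_biUnion hq he

lemma link_univ_iff {β : ℕ} (U : Set (Set (Tup 1 (β + 1)))) :
    link U = Set.univ ↔ ∀ h : V 1, ∀ v : V (β + 1), (h, v) ∈ link U := by
  rw [Set.eq_univ_iff_forall]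
  exact ⟨fun H h v => H (h, v), fun H e => by obtain ⟨h, v⟩ := e; exact H h v⟩

lemma easy_psi1 {β : ℕ} {R : Set (Set (Tup 1 β))} (hR : IsBM 1 β R)
    {U : Set (Set (Tup 1 (β + 1)))} (hU : U ∈ psi1 β R) : IsBM 1 (β + 1) U := by
  have hRfin : R.Finite := bm_finite hR
  obtain ⟨s, hs3, rfl⟩ := hU
  simp only [Set.mem_insert_iff, Set.mem_singleton_iff] at hs3
  -- s contains a tuple with new slot-2 letter, and is a square with all-new edges
  have hsq : ∃ a' b', s = square a1 (bn β) a' b' := by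
    rcases hs3 with rfl | rfl | rfl
    · exact ⟨_, _, rfl⟩
    · exact ⟨_, _, rfl⟩
    · exact ⟨_, _, rfl⟩
  obtain ⟨a', b', hseq⟩ := hsq
  have hsnew : s ∉ upR R := by
    apply notin_upR (t := (a1, bn β, a', b'))
    · rw [hseq]; exact Set.mem_insert _ _
    · rfl
  have hnewedge : ∀ h : V 1, ∀ v : V (β + 1), v.1 = Fin.last β → (h, v) ∈ edges s := by
    intro h v hv
    rcases Vnew_cases v hv with rfl | rfl <;> rcases V1_cases h with rfl | rfl <;>
      rcases hs3 with rfl | rfl | rfl <;> rw [edges_square] <;>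
      simp only [Set.mem_insert_iff, Set.mem_singleton_iff, iv_iv, Prod.mk.injEq] <;> tauto
  refine ⟨?_, ?_, ?_⟩
  · rintro q (⟨r, hr, rfl⟩ | rfl)
    · obtain ⟨a, b, c, d, rfl⟩ := hR.1 r hr
      exact ⟨a, up b, c, up d, upSq_square a b c d⟩
    · rcases hs3 with rfl | rfl | rfl
      · exact ⟨_, _, _, _, rfl⟩
      · exact ⟨_, _, _, _, rfl⟩
      · exact ⟨_, _, _, _, rfl⟩
  · rw [Set.ncard_union_eq (Set.disjoint_singleton_right.2 hsnew)
      (hRfin.image upSq) (Set.finite_singleton s)]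
    rw [ncard_upR, hR.2.1, Set.ncard_singleton]
    ring
  · rw [link_univ_iff]
    intro h v
    by_cases hv : v.1 = Fin.last β
    · exact mem_link_of (Set.mem_union_right _ rfl) (hnewedge h v hv)
    · obtain ⟨w, rfl⟩ := Vold_cases v hv
      have : (h, w) ∈ link R := hR.2.2 ▸ Set.mem_univ _
      rw [link_eq] at this
      simp only [Set.mem_iUnion, exists_prop] at this
      obtain ⟨r, hr, he⟩ := this
      refine mem_link_of (Set.mem_union_left _ ⟨r, hr, rfl⟩) ?_
      rw [edges_upSq]
      exact ⟨(h, w), he, rfl⟩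

lemma iv_fst {n : ℕ} (v : V n) : (iv v).1 = v.1 := rfl

lemma new_eq_or {β : ℕ} {v ν : V (β + 1)} (hv : v.1 = Fin.last β)
    (hν : ν.1 = Fin.last β) : v = ν ∨ v = iv ν := by
  obtain ⟨i, s⟩ := v; obtain ⟨j, t⟩ := ν
  cases s <;> cases t <;> simp_all [iv]

lemma new_ne_up {β : ℕ} {v : V (β + 1)} (hv : v.1 = Fin.last β) (w : V β) :
    v ≠ up w := fun h => up_ne_last w (h ▸ hv)

lemma easy_psi2' {β : ℕ} {R : Set (Set (Tup 1 β))} (hR : IsBM 1 β R)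
    (a a' : V 1) (b b' : V β) (ν : V (β + 1)) (hν : ν.1 = Fin.last β)
    (hsq : square a b a' b' ∈ R) :
    IsBM 1 (β + 1)
      (upR (R \ {square a b a' b'}) ∪ {square a ν a' (up b'), square a (up b) a' (iv ν)}) := by
  have hRfin : R.Finite := bm_finite hR
  set sq := square a b a' b' with hsqdef
  set p1 := square a ν a' (up b') with hp1
  set p2 := square a (up b) a' (iv ν) with hp2
  have hivν : (iv ν).1 = Fin.last β := by rw [iv_fst]; exact hν
  have hp1new : p1 ∉ upR (R \ {sq}) := by
    apply notin_upR (t := (a, ν, a', up b'))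
    · exact Set.mem_insert _ _
    · exact hν
  have hp2new : p2 ∉ upR (R \ {sq}) := by
    apply notin_upR (t := (a', iv ν, a, up b))
    · rw [hp2, square_swap]; exact Set.mem_insert _ _
    · exact hivν
  have hedges1 : edges p1 = {(iv a, ν), (iv a', up b'), (a, iv (up b')), (a', iv ν)} :=
    edges_square _ _ _ _
  have hedges2 : edges p2 = {(iv a, up b), (iv a', iv ν), (a, ν), (a', iv (up b))} := by
    rw [hp2, edges_square, iv_iv]
  have hne12 : p1 ≠ p2 := by
    intro h
    have : (iv a, ν) ∈ edges p2 := by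
      rw [← h, hedges1]; exact Set.mem_insert _ _
    rw [hedges2] at this
    simp only [Set.mem_insert_iff, Set.mem_singleton_iff, Prod.mk.injEq] at this
    rcases this with ⟨_, h2⟩ | ⟨_, h2⟩ | ⟨h1, _⟩ | ⟨_, h2⟩
    · exact new_ne_up hν b h2
    · exact iv_ne ν h2.symm
    · exact iv_ne a h1
    · exact up_ne_last b (by rw [← iv_fst, ← h2]; exact hν)
  have hβ : 1 ≤ β := by
    have : 0 < R.ncard := (Set.ncard_pos hRfin).2 ⟨sq, hsq⟩
    rw [hR.2.1] at this; omega
  refine ⟨?_, ?_, ?_⟩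
  · rintro q (⟨r, hr, rfl⟩ | hq)
    · obtain ⟨x, y, z, w, rfl⟩ := hR.1 r hr.1
      exact ⟨x, up y, z, up w, upSq_square x y z w⟩
    · rcases hq with rfl | rfl
      · exact ⟨_, _, _, _, rfl⟩
      · exact ⟨_, _, _, _, rfl⟩
  · have hdisj : Disjoint (upR (R \ {sq})) {p1, p2} := by
      rw [Set.disjoint_right]
      rintro x (rfl | rfl)
      · exact hp1new
      · exact hp2new
    rw [Set.ncard_union_eq hdisj (hRfin.diff.image upSq) (Set.toFinite _)]
    rw [ncard_upR, Set.ncard_diff_singleton_of_mem hsq,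
      Set.ncard_pair hne12, hR.2.1]
    omega
  · rw [link_univ_iff]
    intro h v
    have hP1 : p1 ∈ upR (R \ {sq}) ∪ {p1, p2} := Set.mem_union_right _ (Set.mem_insert _ _)
    have hP2 : p2 ∈ upR (R \ {sq}) ∪ {p1, p2} :=
      Set.mem_union_right _ (Set.mem_insert_of_mem _ rfl)
    by_cases hv : v.1 = Fin.last β
    · rcases new_eq_or hv hν with rfl | rfl
      · rcases V1_eq_or h (iv a) with rfl | rfl
        · exact mem_link_of hP1 (by rw [hedges1]; exact Set.mem_insert _ _)
        · refine mem_link_of hP2 ?_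
          rw [hedges2]
          simp only [Set.mem_insert_iff, Set.mem_singleton_iff, iv_iv]
          tauto
      · rcases V1_eq_or h (iv a') with rfl | rfl
        · refine mem_link_of hP2 ?_
          rw [hedges2]
          simp only [Set.mem_insert_iff, Set.mem_singleton_iff]
          tauto
        · refine mem_link_of hP1 ?_
          rw [hedges1]
          simp only [Set.mem_insert_iff, Set.mem_singleton_iff, iv_iv]
          tauto
    · obtain ⟨w, rfl⟩ := Vold_cases v hv
      have : (h, w) ∈ link R := hR.2.2 ▸ Set.mem_univ _
      rw [link_eq] at this
      simp only [Set.mem_iUnion, exists_prop] at this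
      obtain ⟨r, hr, he⟩ := this
      rcases eq_or_ne r sq with rfl | hrne
      · rw [hsqdef, edges_square] at he
        simp only [Set.mem_insert_iff, Set.mem_singleton_iff, Prod.mk.injEq] at he
        rcases he with ⟨rfl, rfl⟩ | ⟨rfl, rfl⟩ | ⟨rfl, rfl⟩ | ⟨rfl, rfl⟩
        · exact mem_link_of hP2 (by rw [hedges2]; exact Set.mem_insert _ _)
        · refine mem_link_of hP1 ?_
          rw [hedges1]
          simp only [Set.mem_insert_iff, Set.mem_singleton_iff]
          tauto
        · refine mem_link_of hP1 ?_
          rw [hedges1, ← up_iv]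
          simp only [Set.mem_insert_iff, Set.mem_singleton_iff]
          tauto
        · refine mem_link_of hP2 ?_
          rw [hedges2, ← up_iv]
          simp only [Set.mem_insert_iff, Set.mem_singleton_iff]
          tauto
      · refine mem_link_of (Set.mem_union_left _ ⟨r, ⟨hr, hrne⟩, rfl⟩) ?_
        rw [edges_upSq]
        exact ⟨(h, w), he, rfl⟩

lemma easy_psi2 {β : ℕ} {R : Set (Set (Tup 1 β))} (hR : IsBM 1 β R)
    {U : Set (Set (Tup 1 (β + 1)))} (hU : U ∈ psi2 β R) : IsBM 1 (β + 1) U := by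
  obtain ⟨a, b, a', b', hsq, hopt | hopt⟩ := hU
  · rw [hopt]
    exact easy_psi2' hR a a' b b' (bn β) rfl hsq
  · rw [hopt]
    have := easy_psi2' hR a a' b b' (iv (bn β)) rfl hsq
    rwa [iv_iv] at this

/-- the set of "new" edges -/
def NE (β : ℕ) : Set (V 1 × V (β + 1)) := {e | e.2.1 = Fin.last β}

lemma NE_explicit (β : ℕ) :
    NE β = {(a1, bn β), (iv a1, bn β), (a1, iv (bn β)), (iv a1, iv (bn β))} := by
  ext ⟨h, v⟩
  simp only [NE, Set.mem_setOf_eq, Set.mem_insert_iff, Set.mem_singleton_iff, Prod.mk.injEq]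
  constructor
  · intro hv
    rcases V1_cases h with rfl | rfl <;> rcases Vnew_cases v hv with rfl | rfl <;> tauto
  · rintro (⟨rfl, rfl⟩ | ⟨rfl, rfl⟩ | ⟨rfl, rfl⟩ | ⟨rfl, rfl⟩) <;> rfl

lemma a1_ne_iv : a1 ≠ iv a1 := (iv_ne a1).symm

lemma ncard_NE (β : ℕ) : (NE β).ncard = 4 := by
  rw [NE_explicit]
  rw [Set.ncard_insert_of_notMem (by
    simp only [Set.mem_insert_iff, Set.mem_singleton_iff, Prod.mk.injEq, not_or]
    exact ⟨fun h => a1_ne_iv h.1, fun h => bn_ne_ivbn h.2, fun h => a1_ne_iv h.1⟩)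
    (Set.toFinite _)]
  rw [Set.ncard_insert_of_notMem (by
    simp only [Set.mem_insert_iff, Set.mem_singleton_iff, Prod.mk.injEq, not_or]
    exact ⟨fun h => a1_ne_iv h.1.symm, fun h => bn_ne_ivbn h.2⟩) (Set.toFinite _)]
  rw [Set.ncard_insert_of_notMem (by
    simp only [Set.mem_singleton_iff, Prod.mk.injEq, not_or]
    exact fun h => a1_ne_iv h.1) (Set.toFinite _)]
  rw [Set.ncard_singleton]

lemma eq_of_shared_edge {β : ℕ} {U : Set (Set (Tup 1 (β + 1)))}
    (hdisj : ∀ q ∈ U, ∀ q' ∈ U, q ≠ q' → Disjoint (edges q) (edges q'))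
    {q q' : Set (Tup 1 (β + 1))} (hq : q ∈ U) (hq' : q' ∈ U)
    {e : V 1 × V (β + 1)} (he : e ∈ edges q) (he' : e ∈ edges q') : q = q' := by
  by_contra hne
  exact Set.disjoint_left.mp (hdisj q hq q' hq' hne) he he'

lemma down_of_old {β : ℕ} {q : Set (Tup 1 (β + 1))}
    (hq : ∃ x v x' w, q = square x v x' w)
    (hold : ∀ t ∈ q, t.2.1.1 ≠ Fin.last β) :
    ∃ r, (∃ x v0 x' w0, r = square x v0 x' w0) ∧ upSq r = q := by
  obtain ⟨x, v, x', w, rfl⟩ := hq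
  obtain ⟨v0, rfl⟩ := Vold_cases v (hold (x, v, x', w) (Set.mem_insert _ _))
  obtain ⟨w0, rfl⟩ := Vold_cases w (by
    apply hold (x', w, x, up v0)
    exact Set.mem_insert_of_mem _ (Set.mem_insert _ _))
  exact ⟨square x v0 x' w0, ⟨x, v0, x', w0, rfl⟩, upSq_square _ _ _ _⟩

lemma edges_sub_NE {β : ℕ} {x x' : V 1} {v w : V (β + 1)}
    (hv : v.1 = Fin.last β) (hw : w.1 = Fin.last β) :
    edges (square x v x' w) ⊆ NE β := by
  rw [edges_square]
  rintro e (rfl | rfl | rfl | rfl)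
  · exact hv
  · exact hw
  · exact hw
  · exact hv

lemma hardA {β : ℕ} {U : Set (Set (Tup 1 (β + 1)))} (hU : IsBM 1 (β + 1) U)
    (hUfin : U.Finite)
    (hcard4 : ∀ q ∈ U, (edges q).ncard = 4)
    (hdisj : ∀ q ∈ U, ∀ q' ∈ U, q ≠ q' → Disjoint (edges q) (edges q'))
    {q1 : Set (Tup 1 (β + 1))} {y' : V 1} {u' : V (β + 1)}
    (hq1 : q1 ∈ U) (hq1eq : q1 = square (iv a1) (bn β) y' u')
    (hu' : u'.1 = Fin.last β) :
    ∃ R, IsBM 1 β R ∧ U ∈ psi β R := by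
  have hsub : edges q1 ⊆ NE β := hq1eq ▸ edges_sub_NE rfl hu'
  have hNE : edges q1 = NE β :=
    Set.eq_of_subset_of_ncard_le hsub (by rw [hcard4 q1 hq1, ncard_NE]) (Set.toFinite _)
  have hold : ∀ q ∈ U, q ≠ q1 → ∀ t ∈ q, t.2.1.1 ≠ Fin.last β := by
    intro q hq hne t ht hlast
    have hmem : (iv t.1, t.2.1) ∈ edges q1 := by rw [hNE]; exact hlast
    exact Set.disjoint_left.mp (hdisj q hq q1 hq1 hne) (mem_edges ht) hmem
  set R := upSq ⁻¹' (U \ {q1}) with hRdef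
  have hupR : upR R = U \ {q1} := by
    apply Set.Subset.antisymm (Set.image_preimage_subset _ _)
    intro q hq
    obtain ⟨r, _, hrup⟩ := down_of_old (hU.1 q hq.1) (hold q hq.1 hq.2)
    exact ⟨r, Set.mem_preimage.2 (by rw [hrup]; exact hq), hrup⟩
  have hRsq : ∀ r ∈ R, ∃ x v x' w, r = square x v x' w := by
    intro r hr
    have hq : upSq r ∈ U \ {q1} := hr
    obtain ⟨r', hr'sq, hup⟩ := down_of_old (hU.1 _ hq.1) (hold _ hq.1 hq.2)
    obtain ⟨x, v, x', w, rfl⟩ := hr'sq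
    exact ⟨x, v, x', w, (upSq_inj hup).symm⟩
  have hRn : R.ncard = β := by
    have h1 := ncard_upR R
    rw [hupR, Set.ncard_diff_singleton_of_mem hq1] at h1
    have h2 := hU.2.1
    omega
  have hRlink : link R = Set.univ := by
    rw [Set.eq_univ_iff_forall]
    rintro ⟨h, w⟩
    have hmem : (h, up w) ∈ link U := hU.2.2 ▸ Set.mem_univ _
    rw [link_eq] at hmem
    simp only [Set.mem_iUnion, exists_prop] at hmem
    obtain ⟨q, hq, he⟩ := hmem
    have hqne : q ≠ q1 := by
      rintro rfl
      have : (h, up w) ∈ NE β := hNE ▸ he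
      exact up_ne_last w this
    have hqmem : q ∈ upR R := by rw [hupR]; exact ⟨hq, hqne⟩
    obtain ⟨r, hr, rfl⟩ := hqmem
    rw [edges_upSq] at he
    obtain ⟨e', he', heq⟩ := he
    have he'' : e' = (h, w) := by
      obtain ⟨h0, w0⟩ := e'
      simp only [Prod.mk.injEq] at heq
      exact Prod.ext heq.1 (up_inj heq.2)
    exact mem_link_of hr (he'' ▸ he')
  have hq1mem : q1 = square a1 (bn β) (iv a1) (iv (bn β)) ∨
      q1 = square a1 (bn β) a1 (iv (bn β)) ∨ q1 = square a1 (bn β) (iv a1) (bn β) := by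
    rcases V1_cases y' with rfl | rfl <;> rcases Vnew_cases u' hu' with rfl | rfl
    · right; right; rw [hq1eq, square_swap]
    · left; rw [hq1eq, square_inv]; simp
    · exfalso
      have h4 := hcard4 q1 hq1
      rw [hq1eq, edges_square] at h4
      simp only [iv_iv, Set.insert_idem, Set.pair_eq_singleton] at h4
      have hle := Set.ncard_insert_le ((iv (iv a1), bn β)) ({(iv a1, iv (bn β))} : Set _)
      rw [Set.ncard_singleton] at hle
      simp only [iv_iv] at hle
      omega
    · right; left; rw [hq1eq, square_inv]; simp
  refine ⟨R, ⟨hRsq, by rw [one_mul]; exact hRn, hRlink⟩, Or.inl ⟨q1, ?_, ?_⟩⟩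
  · simpa using hq1mem
  · rw [hupR]
    exact Set.diff_union_of_subset (Set.singleton_subset_iff.2 hq1)

lemma iv_inj {n : ℕ} {x y : V n} (h : iv x = iv y) : x = y := by
  have := congrArg iv h; simpa using this

lemma newsq_NE {β : ℕ} {U : Set (Set (Tup 1 (β + 1)))}
    (hcard4 : ∀ q ∈ U, (edges q).ncard = 4)
    {q : Set (Tup 1 (β + 1))} {x x' : V 1} {v w : V (β + 1)}
    (hq : q ∈ U) (heq : q = square x v x' w)
    (hv : v.1 = Fin.last β) (hw : w.1 = Fin.last β) : edges q = NE β :=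
  Set.eq_of_subset_of_ncard_le (heq ▸ edges_sub_NE hv hw)
    (by rw [hcard4 q hq, ncard_NE]) (Set.toFinite _)

lemma hardB {β : ℕ} {U : Set (Set (Tup 1 (β + 1)))} (hU : IsBM 1 (β + 1) U)
    (hUfin : U.Finite)
    (hcard4 : ∀ q ∈ U, (edges q).ncard = 4)
    (hdisj : ∀ q ∈ U, ∀ q' ∈ U, q ≠ q' → Disjoint (edges q) (edges q'))
    {q1 : Set (Tup 1 (β + 1))} {y' : V 1} {b' : V β}
    (hq1 : q1 ∈ U) (hq1eq : q1 = square (iv a1) (bn β) y' (up b')) :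
    ∃ R, IsBM 1 β R ∧ U ∈ psi β R := by
  have hβ : 0 < β := b'.1.pos
  have hE1 : edges q1 = {(a1, bn β), (iv y', up b'), (iv a1, iv (up b')), (y', iv (bn β))} := by
    rw [hq1eq, edges_square, iv_iv]
  -- the square q2 covering the edge (iv a1, bn)
  have hlinkU : ∀ e : V 1 × V (β + 1), ∃ q ∈ U, e ∈ edges q := by
    intro e
    have : e ∈ link U := hU.2.2 ▸ Set.mem_univ _
    rw [link_eq] at this
    simpa only [Set.mem_iUnion, exists_prop] using this
  obtain ⟨q2, hq2, he2⟩ := hlinkU (iv a1, bn β)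
  obtain ⟨x2, v2, x2', w2, hq2sq⟩ := hU.1 q2 hq2
  obtain ⟨z, u, z', w2', hq2eq, hz⟩ := rep_of_edge (hq2sq ▸ he2)
  rw [← hq2sq] at hq2eq
  simp only [Prod.mk.injEq] at hz
  obtain ⟨hz1, rfl⟩ := hz
  have hz' : z = a1 := iv_inj hz1.symm
  subst hz'
  clear hz1 hq2sq
  -- q1 ≠ q2
  have hne12 : q1 ≠ q2 := by
    intro h
    have : (iv a1, bn β) ∈ edges q1 := h ▸ he2
    rw [hE1] at this
    simp only [Set.mem_insert_iff, Set.mem_singleton_iff, Prod.mk.injEq] at this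
    rcases this with ⟨h1, _⟩ | ⟨_, h2⟩ | ⟨_, h2⟩ | ⟨_, h2⟩
    · exact iv_ne a1 h1
    · exact up_ne_bn b' h2.symm
    · exact up_ne_last b' (by rw [← iv_fst, ← h2]; rfl)
    · exact bn_ne_ivbn h2
  -- w2' is old
  have hw2old : w2'.1 ≠ Fin.last β := by
    intro hw
    have hNE2 : edges q2 = NE β := newsq_NE hcard4 hq2 hq2eq rfl hw
    have hshare : (a1, bn β) ∈ edges q2 := by rw [hNE2]; exact rfl
    have : (a1, bn β) ∈ edges q1 := by rw [hE1]; exact Set.mem_insert _ _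
    exact hne12 (eq_of_shared_edge hdisj hq1 hq2 this hshare)
  obtain ⟨c, rfl⟩ := Vold_cases w2' hw2old
  have hE2 : edges q2 = {(iv a1, bn β), (iv z', up c), (a1, iv (up c)), (z', iv (bn β))} := by
    rw [hq2eq, edges_square]
  have h1bn : (a1, bn β) ∈ edges q1 := by rw [hE1]; exact Set.mem_insert _ _
  have h2bn : (iv a1, bn β) ∈ edges q2 := by rw [hE2]; exact Set.mem_insert _ _
  -- determine z' = iv y'
  have key : ∀ h : V 1, (h, iv (bn β)) ∈ edges q1 ∪ edges q2 := by
    intro h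
    obtain ⟨q3, hq3, he3⟩ := hlinkU (h, iv (bn β))
    obtain ⟨x3, v3, x3', w3, hq3sq⟩ := hU.1 q3 hq3
    obtain ⟨y, u, y3, u3, hq3eq, hy⟩ := rep_of_edge (hq3sq ▸ he3)
    rw [← hq3sq] at hq3eq
    simp only [Prod.mk.injEq] at hy
    obtain ⟨hy1, rfl⟩ := hy
    have hyinv : y = iv h := by rw [← iv_iv y, ← hy1]
    subst hyinv
    have hu3old : u3.1 ≠ Fin.last β := by
      intro hw
      have hNE3 : edges q3 = NE β := newsq_NE hcard4 hq3 hq3eq rfl hw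
      have hshare : (a1, bn β) ∈ edges q3 := by rw [hNE3]; exact rfl
      have hq31 : q3 = q1 := eq_of_shared_edge hdisj hq3 hq1 hshare h1bn
      have : (iv y', up b') ∈ NE β := by
        rw [← hNE3, hq31, hE1]
        exact Set.mem_insert_of_mem _ (Set.mem_insert _ _)
      exact up_ne_last b' this
    have hE3 : edges q3 = {(h, iv (bn β)), (iv y3, u3), (iv h, iv u3), (y3, bn β)} := by
      rw [hq3eq, edges_square]; simp only [iv_iv]
    rcases V1_eq_or y3 a1 with rfl | rfl
    · -- q3 = q1
      have hshare : (a1, bn β) ∈ edges q3 := by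
        rw [hE3]
        exact Set.mem_insert_of_mem _ (Set.mem_insert_of_mem _ (Set.mem_insert_of_mem _ rfl))
      have hq31 : q3 = q1 := eq_of_shared_edge hdisj hq3 hq1 hshare h1bn
      exact Set.mem_union_left _ (hq31 ▸ he3)
    · -- q3 = q2
      have hshare : (iv a1, bn β) ∈ edges q3 := by
        rw [hE3]
        exact Set.mem_insert_of_mem _ (Set.mem_insert_of_mem _ (Set.mem_insert_of_mem _ rfl))
      have hq32 : q3 = q2 := eq_of_shared_edge hdisj hq3 hq2 hshare h2bn
      exact Set.mem_union_right _ (hq32 ▸ he3)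
  have hBn_q1 : ∀ h : V 1, (h, iv (bn β)) ∈ edges q1 → h = y' := by
    intro h hmem
    rw [hE1] at hmem
    simp only [Set.mem_insert_iff, Set.mem_singleton_iff, Prod.mk.injEq] at hmem
    rcases hmem with ⟨_, h2⟩ | ⟨_, h2⟩ | ⟨_, h2⟩ | ⟨h1, _⟩
    · exact absurd h2 ivbn_ne_bn
    · exact absurd h2.symm (up_ne_ivbn b')
    · exact absurd (iv_inj h2) (bn_ne_up b')
    · exact h1
  have hBn_q2 : ∀ h : V 1, (h, iv (bn β)) ∈ edges q2 → h = z' := by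
    intro h hmem
    rw [hE2] at hmem
    simp only [Set.mem_insert_iff, Set.mem_singleton_iff, Prod.mk.injEq] at hmem
    rcases hmem with ⟨_, h2⟩ | ⟨_, h2⟩ | ⟨_, h2⟩ | ⟨h1, _⟩
    · exact absurd h2 ivbn_ne_bn
    · exact absurd h2.symm (up_ne_ivbn c)
    · exact absurd (iv_inj h2) (bn_ne_up c)
    · exact h1
  have hz'eq : z' = iv y' := by
    have k1 := key a1
    have k2 := key (iv a1)
    rcases k1 with m1 | m1 <;> rcases k2 with m2 | m2
    · exact absurd ((hBn_q1 _ m1).trans (hBn_q1 _ m2).symm) a1_ne_iv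
    · rw [← hBn_q2 _ m2, ← hBn_q1 _ m1]
    · rw [← hBn_q1 _ m2, iv_iv, ← hBn_q2 _ m1]
    · exact absurd ((hBn_q2 _ m1).trans (hBn_q2 _ m2).symm) a1_ne_iv
  subst hz'eq
  simp only [iv_iv] at hE2
  -- the reconstruction
  set sq0 := square (iv a1) (iv c) y' b' with hsq0
  have hEsq : edges sq0 = {(a1, iv c), (iv y', b'), (iv a1, iv b'), (y', c)} := by
    rw [hsq0, edges_square]; simp only [iv_iv]
  have hold2 : ∀ q ∈ U, q ≠ q1 → q ≠ q2 → ∀ t ∈ q, t.2.1.1 ≠ Fin.last β := by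
    intro q hq hne1 hne2 t ht hlast
    have he : (iv t.1, t.2.1) ∈ edges q := mem_edges ht
    rcases new_eq_or hlast (rfl : (bn β).1 = Fin.last β) with hv | hv
    · rcases V1_eq_or (iv t.1) a1 with hh | hh
      · refine hne1 (eq_of_shared_edge hdisj hq hq1 he ?_)
        rw [show ((iv t.1, t.2.1) : V 1 × V (β+1)) = (a1, bn β) from Prod.ext hh hv, hE1]
        exact Set.mem_insert _ _
      · refine hne2 (eq_of_shared_edge hdisj hq hq2 he ?_)
        rw [show ((iv t.1, t.2.1) : V 1 × V (β+1)) = (iv a1, bn β) from Prod.ext hh hv, hE2]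
        exact Set.mem_insert _ _
    · rcases V1_eq_or (iv t.1) y' with hh | hh
      · refine hne1 (eq_of_shared_edge hdisj hq hq1 he ?_)
        rw [show ((iv t.1, t.2.1) : V 1 × V (β+1)) = (y', iv (bn β)) from Prod.ext hh hv, hE1]
        simp only [Set.mem_insert_iff, Set.mem_singleton_iff]; tauto
      · refine hne2 (eq_of_shared_edge hdisj hq hq2 he ?_)
        rw [show ((iv t.1, t.2.1) : V 1 × V (β+1)) = (iv y', iv (bn β)) from Prod.ext hh hv, hE2]
        simp only [Set.mem_insert_iff, Set.mem_singleton_iff]; tauto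
  set pre := upSq ⁻¹' (U \ {q1, q2}) with hpre
  have hmem2 : ∀ q, q ∈ U \ {q1, q2} ↔ q ∈ U ∧ q ≠ q1 ∧ q ≠ q2 := by
    intro q
    simp only [Set.mem_diff, Set.mem_insert_iff, Set.mem_singleton_iff, not_or]
  have hupR : upR pre = U \ {q1, q2} := by
    apply Set.Subset.antisymm (Set.image_preimage_subset _ _)
    intro q hq
    rw [hmem2] at hq
    obtain ⟨r, _, hrup⟩ := down_of_old (hU.1 q hq.1) (hold2 q hq.1 hq.2.1 hq.2.2)
    exact ⟨r, Set.mem_preimage.2 (by rw [hrup, hmem2]; exact hq), hrup⟩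
  have hsqnotin : sq0 ∉ pre := by
    intro hmem
    have hup : upSq sq0 ∈ U \ {q1, q2} := hmem
    have hsh : (iv y', up b') ∈ edges (upSq sq0) := by
      rw [edges_upSq]
      refine ⟨(iv y', b'), ?_, rfl⟩
      rw [hEsq]
      exact Set.mem_insert_of_mem _ (Set.mem_insert _ _)
    have h1 : (iv y', up b') ∈ edges q1 := by
      rw [hE1]; exact Set.mem_insert_of_mem _ (Set.mem_insert _ _)
    exact ((hmem2 _).1 hup).2.1 (eq_of_shared_edge hdisj hup.1 hq1 hsh h1)
  set R := pre ∪ {sq0} with hRdef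
  have hsqR : sq0 ∈ R := Set.mem_union_right _ rfl
  have hRdiff : R \ {sq0} = pre := by
    rw [hRdef, Set.union_singleton, Set.insert_diff_self_of_notMem hsqnotin]
  have hprefin : pre.Finite := Set.Finite.preimage (upSq_inj.injOn) hUfin.diff
  have hq1ne2 : ({q1, q2} : Set (Set (Tup 1 (β + 1)))) ⊆ U := by
    rintro q (rfl | rfl)
    · exact hq1
    · exact hq2
  have hncard_pre : pre.ncard = β - 1 := by
    have h1 := ncard_upR pre
    rw [hupR, Set.ncard_diff hq1ne2, Set.ncard_pair hne12] at h1
    have h2 := hU.2.1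
    omega
  have hRn : R.ncard = β := by
    rw [hRdef, Set.union_singleton, Set.ncard_insert_of_notMem hsqnotin hprefin, hncard_pre]
    omega
  have hRsq : ∀ r ∈ R, ∃ x v x' w, r = square x v x' w := by
    rintro r (hr | rfl)
    · have hq : upSq r ∈ U \ {q1, q2} := hr
      rw [hmem2] at hq
      obtain ⟨r', hr'sq, hup⟩ := down_of_old (hU.1 _ hq.1) (hold2 _ hq.1 hq.2.1 hq.2.2)
      obtain ⟨x, v, x', w, rfl⟩ := hr'sq
      exact ⟨x, v, x', w, (upSq_inj hup).symm⟩
    · exact ⟨_, _, _, _, rfl⟩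
  have hRlink : link R = Set.univ := by
    rw [Set.eq_univ_iff_forall]
    rintro ⟨h, w⟩
    obtain ⟨q, hq, he⟩ := hlinkU (h, up w)
    rcases eq_or_ne q q1 with rfl | hne1
    · rw [hE1] at he
      simp only [Set.mem_insert_iff, Set.mem_singleton_iff, Prod.mk.injEq] at he
      rcases he with ⟨_, h2⟩ | ⟨rfl, h2⟩ | ⟨rfl, h2⟩ | ⟨_, h2⟩
      · exact absurd h2 (up_ne_bn w)
      · obtain rfl : w = b' := up_inj h2
        refine mem_link_of hsqR ?_
        rw [hEsq]
        exact Set.mem_insert_of_mem _ (Set.mem_insert _ _)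
      · obtain rfl : w = iv b' := up_inj (by rw [h2, ← up_iv])
        refine mem_link_of hsqR ?_
        rw [hEsq]
        simp only [Set.mem_insert_iff, Set.mem_singleton_iff]; tauto
      · exact absurd h2 (up_ne_ivbn w)
    rcases eq_or_ne q q2 with rfl | hne2
    · rw [hE2] at he
      simp only [Set.mem_insert_iff, Set.mem_singleton_iff, Prod.mk.injEq] at he
      rcases he with ⟨_, h2⟩ | ⟨rfl, h2⟩ | ⟨rfl, h2⟩ | ⟨_, h2⟩
      · exact absurd h2 (up_ne_bn w)
      · obtain rfl : w = c := up_inj h2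
        refine mem_link_of hsqR ?_
        rw [hEsq]
        simp only [Set.mem_insert_iff, Set.mem_singleton_iff]; tauto
      · obtain rfl : w = iv c := up_inj (by rw [h2, ← up_iv])
        refine mem_link_of hsqR ?_
        rw [hEsq]
        exact Set.mem_insert _ _
      · exact absurd h2 (up_ne_ivbn w)
    · have hqmem : q ∈ upR pre := by rw [hupR, hmem2]; exact ⟨hq, hne1, hne2⟩
      obtain ⟨r, hr, rfl⟩ := hqmem
      rw [edges_upSq] at he
      obtain ⟨e', he', heq⟩ := he
      have he'' : e' = (h, w) := by
        obtain ⟨h0, w0⟩ := e'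
        simp only [Prod.mk.injEq] at heq
        exact Prod.ext heq.1 (up_inj heq.2)
      exact mem_link_of (Set.mem_union_left _ hr) (he'' ▸ he')
  refine ⟨R, ⟨hRsq, by rw [one_mul]; exact hRn, hRlink⟩,
    Or.inr ⟨iv a1, iv c, y', b', hsqR, Or.inl ?_⟩⟩
  have hq2p2 : square (iv a1) (up (iv c)) y' (iv (bn β)) = q2 := by
    rw [hq2eq, square_inv]
    simp only [iv_iv, up_iv]
  rw [hRdiff, hupR, ← hq1eq, hq2p2]
  exact (Set.diff_union_of_subset hq1ne2).symm

/-- Every (1,β+1)-BM relation arises via ψ_β from some (1,β)-BM relation. -/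
theorem psi_surjective {β : ℕ} :
    {U : Set (Set (Tup 1 (β + 1))) | IsBM 1 (β + 1) U} =
      ⋃ R ∈ {R : Set (Set (Tup 1 β)) | IsBM 1 β R}, psi β R := by
  ext U
  simp only [Set.mem_setOf_eq, Set.mem_iUnion, exists_prop]
  constructor
  · intro hU
    have hUfin : U.Finite := bm_finite hU
    obtain ⟨hcard4, hdisj⟩ := bm_partition hU
    have : (a1, bn β) ∈ link U := hU.2.2 ▸ Set.mem_univ _
    rw [link_eq] at this
    simp only [Set.mem_iUnion, exists_prop] at this
    obtain ⟨q1, hq1, he1⟩ := this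
    obtain ⟨x, v, x', w, hq1sq⟩ := hU.1 q1 hq1
    obtain ⟨y, u, y', u', hq1eq, hy⟩ := rep_of_edge (hq1sq ▸ he1)
    rw [← hq1sq] at hq1eq
    simp only [Prod.mk.injEq] at hy
    obtain ⟨hy1, rfl⟩ := hy
    have hyv : y = iv a1 := by rw [← iv_iv y, ← hy1]
    subst hyv
    by_cases hu' : u'.1 = Fin.last β
    · obtain ⟨R, hR, hmem⟩ := hardA hU hUfin hcard4 hdisj hq1 hq1eq hu'
      exact ⟨R, hR, hmem⟩
    · obtain ⟨b', rfl⟩ := Vold_cases u' hu'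
      obtain ⟨R, hR, hmem⟩ := hardB hU hUfin hcard4 hdisj hq1 hq1eq
      exact ⟨R, hR, hmem⟩
  · rintro ⟨R, hR, hmem | hmem⟩
    · exact easy_psi1 hR hmem
    · exact easy_psi2 hR hmem
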